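/- arXiv:1706.07246 — 2 statements merged into one kernel-verified Lean document; each statement's English description precedes it below -/
import Mathlib

section
/- Suppose M ∈ SN_βπ, N ∈ SN_βπ and (M ★ N) ∉ SN_βπ. Then there exist terms P ∈ SN_βπ and Q ∈ SN_βπ such that M →*_βπ P, N →*_βπ Q, (P ★ Q) ∉ SN_βπ, and (P ★ Q) is a βπ-redex (i.e. a redex for one of the rules β, β⊥, π, π⊥). -/
/-! Terms of the λSym_Prop-calculus -/

inductive Tm : Type
  | var : ℕ → Tm
  | pair : Tm → Tm → Tm
  | inj : Fin 2 → Tm → Tm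
  | lam : ℕ → Tm → Tm
  | star : Tm → Tm → Tm
  deriving DecidableEq

namespace Tm

/-- free variables -/
def fv : Tm → Finset ℕ
  | var x => {x}
  | pair p q => fv p ∪ fv q
  | inj _ p => fv p
  | lam x p => fv p \ {x}
  | star p q => fv p ∪ fv q

/-- substitution `P[x := N]` -/
def subst (x : ℕ) (n : Tm) : Tm → Tm
  | var y => if y = x then n else var y
  | pair p q => pair (subst x n p) (subst x n q)
  | inj i p => inj i (subst x n p)
  | lam y p => if y = x then lam y p else lam y (subst x n p)
  | star p q => star (subst x n p) (subst x n q)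

/-- number of free occurrences of `x` -/
def count (x : ℕ) : Tm → ℕ
  | var y => if y = x then 1 else 0
  | pair p q => count x p + count x q
  | inj _ p => count x p
  | lam y p => if y = x then 0 else count x p
  | star p q => count x p + count x q

/-- one-step compatible closure of a base relation -/
inductive Comp (b : Tm → Tm → Prop) : Tm → Tm → Prop
  | base {m n : Tm} : b m n → Comp b m n
  | cpairL {m m' : Tm} (q : Tm) : Comp b m m' → Comp b (pair m q) (pair m' q)
  | cpairR (p : Tm) {m m' : Tm} : Comp b m m' → Comp b (pair p m) (pair p m')
  | cinj (i : Fin 2) {m m' : Tm} : Comp b m m' → Comp b (inj i m) (inj i m')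
  | clam (x : ℕ) {m m' : Tm} : Comp b m m' → Comp b (lam x m) (lam x m')
  | cstarL {m m' : Tm} (q : Tm) : Comp b m m' → Comp b (star m q) (star m' q)
  | cstarR (p : Tm) {m m' : Tm} : Comp b m m' → Comp b (star p m) (star p m')

/-- rule (β) -/
inductive BetaB : Tm → Tm → Prop
  | mk (x : ℕ) (p q : Tm) : BetaB (star (lam x p) q) (subst x q p)

/-- rule (β⊥) -/
inductive BetaBotB : Tm → Tm → Prop
  | mk (x : ℕ) (p q : Tm) : BetaBotB (star q (lam x p)) (subst x q p)

/-- rule (β₀): as (β) but the bound variable occurs at most once -/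
inductive Beta0B : Tm → Tm → Prop
  | mk (x : ℕ) (p q : Tm) : count x p ≤ 1 → Beta0B (star (lam x p) q) (subst x q p)

/-- rules (η) and (η⊥) -/
inductive EtaB : Tm → Tm → Prop
  | eta (x : ℕ) (p : Tm) : x ∉ fv p → EtaB (lam x (star p (var x))) p
  | etaBot (x : ℕ) (p : Tm) : x ∉ fv p → EtaB (lam x (star (var x) p)) p

/-- rule (π) -/
inductive PiB : Tm → Tm → Prop
  | mk1 (p₁ p₂ q : Tm) : PiB (star (pair p₁ p₂) (inj 0 q)) (star p₁ q)
  | mk2 (p₁ p₂ q : Tm) : PiB (star (pair p₁ p₂) (inj 1 q)) (star p₂ q)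

/-- rule (π⊥) -/
inductive PiBotB : Tm → Tm → Prop
  | mk1 (p₁ p₂ q : Tm) : PiBotB (star (inj 0 q) (pair p₁ p₂)) (star q p₁)
  | mk2 (p₁ p₂ q : Tm) : PiBotB (star (inj 1 q) (pair p₁ p₂)) (star q p₂)

/-- union of the base rules β, β⊥, π, π⊥ -/
def BetaPiB (m n : Tm) : Prop := BetaB m n ∨ BetaBotB m n ∨ PiB m n ∨ PiBotB m n

def StepBeta : Tm → Tm → Prop := Comp BetaB
def StepBeta0 : Tm → Tm → Prop := Comp Beta0B
def StepE : Tm → Tm → Prop := Comp EtaB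
def StepPi : Tm → Tm → Prop := Comp PiB
def StepPiBot : Tm → Tm → Prop := Comp PiBotB
def StepBetaPi : Tm → Tm → Prop := Comp BetaPiB

/-- strong normalization of `t` w.r.t. the reduction `r`:
every reduction sequence starting from `t` is finite -/
def SN (r : Tm → Tm → Prop) (t : Tm) : Prop := Acc (fun a b => r b a) t

end Tm

open Tm Relation

/-- If M, N ∈ SN_βπ and (M ★ N) ∉ SN_βπ, then there are P, Q ∈ SN_βπ with
M →*_βπ P, N →*_βπ Q, (P ★ Q) ∉ SN_βπ and (P ★ Q) a βπ-redex. -/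
theorem stmt8 (M N : Tm) (hM : SN StepBetaPi M) (hN : SN StepBetaPi N)
    (h : ¬ SN StepBetaPi (star M N)) :
    ∃ P Q : Tm, SN StepBetaPi P ∧ SN StepBetaPi Q ∧
      ReflTransGen StepBetaPi M P ∧ ReflTransGen StepBetaPi N Q ∧
      ¬ SN StepBetaPi (star P Q) ∧ (∃ R, BetaPiB (star P Q) R) := by
  classical
  induction hM generalizing N with
  | intro M hMacc ihM =>
    induction hN with
    | intro N hNacc ihN =>
      by_cases hred : ∃ R, BetaPiB (star M N) R
      · exact ⟨M, N, Acc.intro M hMacc, Acc.intro N hNacc,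
          Relation.ReflTransGen.refl, Relation.ReflTransGen.refl, h, hred⟩
      · have hex : ∃ t, StepBetaPi (star M N) t ∧ ¬ SN StepBetaPi t := by
          by_contra hc
          push_neg at hc
          exact h (Acc.intro _ (fun t ht => hc t ht))
        obtain ⟨t, hstep, hnt⟩ := hex
        cases hstep with
        | base hb => exact absurd ⟨t, hb⟩ hred
        | cstarL q hs =>
          obtain ⟨P, Q, hP, hQ, hMP, hNQ, hns, hr⟩ :=
            ihM _ hs N (Acc.intro N hNacc) hnt
          exact ⟨P, Q, hP, hQ, Relation.ReflTransGen.head hs hMP, hNQ, hns, hr⟩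
        | cstarR p hs =>
          obtain ⟨P, Q, hP, hQ, hMP, hNQ, hns, hr⟩ := ihN _ hs hnt
          exact ⟨P, Q, hP, hQ, hMP, Relation.ReflTransGen.head hs hNQ, hns, hr⟩
end

section
/- Let M, M', N, N' be λSym_Prop-terms. (1) If M ∼ M' and N ∼ N', then M[x:=N] ∼ M'[x:=N']. (2) If M ∼ M' and M' → N, then there exists a term N' such that M → N' and N ∼ N'. -/
open Tm

/-- equality up to symmetry: smallest relation compatible with the term formers
containing ((M ★ N), (N ★ M)) -/
inductive Sim : Tm → Tm → Prop
  | svar (x : ℕ) : Sim (var x) (var x)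
  | slam (x : ℕ) {m m' : Tm} : Sim m m' → Sim (lam x m) (lam x m')
  | sinj (i : Fin 2) {m m' : Tm} : Sim m m' → Sim (inj i m) (inj i m')
  | spair {m m' n n' : Tm} : Sim m m' → Sim n n' → Sim (pair m n) (pair m' n')
  | sstar {m m' n n' : Tm} : Sim m m' → Sim n n' → Sim (star m n) (star m' n')
  | sswap {m m' n n' : Tm} : Sim m m' → Sim n n' → Sim (star m n) (star n' m')

/-- one step of the compatible closure of the union of β, β⊥, η, η⊥, π, π⊥ -/
def StepFull : Tm → Tm → Prop := Comp (fun m n => BetaPiB m n ∨ EtaB m n)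

lemma sim_refl : ∀ m, Sim m m := by
  intro m
  induction m with
  | var x => exact Sim.svar x
  | pair p q hp hq => exact Sim.spair hp hq
  | inj i p hp => exact Sim.sinj i hp
  | lam x p hp => exact Sim.slam x hp
  | star p q hp hq => exact Sim.sstar hp hq

lemma sim_symm {m n : Tm} (h : Sim m n) : Sim n m := by
  induction h with
  | svar x => exact Sim.svar x
  | slam x _ ih => exact Sim.slam x ih
  | sinj i _ ih => exact Sim.sinj i ih
  | spair _ _ ih1 ih2 => exact Sim.spair ih1 ih2
  | sstar _ _ ih1 ih2 => exact Sim.sstar ih1 ih2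
  | sswap _ _ ih1 ih2 => exact Sim.sswap ih2 ih1

lemma sim_fv {m n : Tm} (h : Sim m n) : fv m = fv n := by
  induction h with
  | svar x => rfl
  | slam x _ ih => simp [fv, ih]
  | sinj i _ ih => simp [fv, ih]
  | spair _ _ ih1 ih2 => simp [fv, ih1, ih2]
  | sstar _ _ ih1 ih2 => simp [fv, ih1, ih2]
  | sswap _ _ ih1 ih2 => simp [fv, ih1, ih2, Finset.union_comm]

lemma sim_subst {M M' N N' : Tm} (x : ℕ) (hM : Sim M M') (hN : Sim N N') :
    Sim (subst x N M) (subst x N' M') := by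
  induction hM with
  | svar y =>
      simp only [subst]
      split
      · exact hN
      · exact Sim.svar y
  | slam y h ih =>
      simp only [subst]
      split
      · exact Sim.slam y h
      · exact Sim.slam y ih
  | sinj i _ ih => exact Sim.sinj i ih
  | spair _ _ ih1 ih2 => exact Sim.spair ih1 ih2
  | sstar _ _ ih1 ih2 => exact Sim.sstar ih1 ih2
  | sswap _ _ ih1 ih2 => exact Sim.sswap ih1 ih2

lemma sim_var_inv {M : Tm} {x : ℕ} (h : Sim M (var x)) : M = var x := by
  cases h; rfl

lemma sim_lam_inv {M p : Tm} {x : ℕ} (h : Sim M (lam x p)) :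
    ∃ m, M = lam x m ∧ Sim m p := by
  cases h with
  | slam _ h => exact ⟨_, rfl, h⟩

lemma sim_inj_inv {M q : Tm} {i : Fin 2} (h : Sim M (inj i q)) :
    ∃ m, M = inj i m ∧ Sim m q := by
  cases h with
  | sinj _ h => exact ⟨_, rfl, h⟩

lemma sim_pair_inv {M a b : Tm} (h : Sim M (pair a b)) :
    ∃ m n, M = pair m n ∧ Sim m a ∧ Sim n b := by
  cases h with
  | spair h1 h2 => exact ⟨_, _, rfl, h1, h2⟩

lemma sim_star_inv {M a b : Tm} (h : Sim M (star a b)) :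
    ∃ m n, M = star m n ∧ ((Sim m a ∧ Sim n b) ∨ (Sim m b ∧ Sim n a)) := by
  cases h with
  | sstar h1 h2 => exact ⟨_, _, rfl, Or.inl ⟨h1, h2⟩⟩
  | sswap h1 h2 => exact ⟨_, _, rfl, Or.inr ⟨h1, h2⟩⟩

lemma sim_comm : ∀ {M' N : Tm}, StepFull M' N → ∀ M, Sim M M' →
    ∃ N', StepFull M N' ∧ Sim N N' := by
  intro M' N h
  induction h with
  | @base m n hb =>
      intro M hM
      rcases hb with hb | hb
      · rcases hb with hb | hb | hb | hb
        · -- β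
          obtain ⟨x, p, q⟩ := hb
          obtain ⟨l, r, rfl, ⟨hl, hr⟩ | ⟨hl, hr⟩⟩ := sim_star_inv hM
          · obtain ⟨mp, rfl, hmp⟩ := sim_lam_inv hl
            exact ⟨subst x r mp,
              Comp.base (Or.inl (Or.inl (BetaB.mk x mp r))),
              sim_subst x (sim_symm hmp) (sim_symm hr)⟩
          · obtain ⟨np, rfl, hnp⟩ := sim_lam_inv hr
            exact ⟨subst x l np,
              Comp.base (Or.inl (Or.inr (Or.inl (BetaBotB.mk x np l)))),
              sim_subst x (sim_symm hnp) (sim_symm hl)⟩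
        · -- β⊥
          obtain ⟨x, p, q⟩ := hb
          obtain ⟨l, r, rfl, ⟨hl, hr⟩ | ⟨hl, hr⟩⟩ := sim_star_inv hM
          · obtain ⟨np, rfl, hnp⟩ := sim_lam_inv hr
            exact ⟨subst x l np,
              Comp.base (Or.inl (Or.inr (Or.inl (BetaBotB.mk x np l)))),
              sim_subst x (sim_symm hnp) (sim_symm hl)⟩
          · obtain ⟨mp, rfl, hmp⟩ := sim_lam_inv hl
            exact ⟨subst x r mp,
              Comp.base (Or.inl (Or.inl (BetaB.mk x mp r))),
              sim_subst x (sim_symm hmp) (sim_symm hr)⟩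
        · -- π
          cases hb with
          | mk1 p₁ p₂ q =>
            obtain ⟨l, r, rfl, ⟨hl, hr⟩ | ⟨hl, hr⟩⟩ := sim_star_inv hM
            · obtain ⟨a₁, a₂, rfl, ha₁, ha₂⟩ := sim_pair_inv hl
              obtain ⟨b, rfl, hb'⟩ := sim_inj_inv hr
              exact ⟨star a₁ b,
                Comp.base (Or.inl (Or.inr (Or.inr (Or.inl (PiB.mk1 a₁ a₂ b))))),
                Sim.sstar (sim_symm ha₁) (sim_symm hb')⟩
            · obtain ⟨b, rfl, hb'⟩ := sim_inj_inv hl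
              obtain ⟨a₁, a₂, rfl, ha₁, ha₂⟩ := sim_pair_inv hr
              exact ⟨star b a₁,
                Comp.base (Or.inl (Or.inr (Or.inr (Or.inr (PiBotB.mk1 a₁ a₂ b))))),
                Sim.sswap (sim_symm ha₁) (sim_symm hb')⟩
          | mk2 p₁ p₂ q =>
            obtain ⟨l, r, rfl, ⟨hl, hr⟩ | ⟨hl, hr⟩⟩ := sim_star_inv hM
            · obtain ⟨a₁, a₂, rfl, ha₁, ha₂⟩ := sim_pair_inv hl
              obtain ⟨b, rfl, hb'⟩ := sim_inj_inv hr
              exact ⟨star a₂ b,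
                Comp.base (Or.inl (Or.inr (Or.inr (Or.inl (PiB.mk2 a₁ a₂ b))))),
                Sim.sstar (sim_symm ha₂) (sim_symm hb')⟩
            · obtain ⟨b, rfl, hb'⟩ := sim_inj_inv hl
              obtain ⟨a₁, a₂, rfl, ha₁, ha₂⟩ := sim_pair_inv hr
              exact ⟨star b a₂,
                Comp.base (Or.inl (Or.inr (Or.inr (Or.inr (PiBotB.mk2 a₁ a₂ b))))),
                Sim.sswap (sim_symm ha₂) (sim_symm hb')⟩
        · -- π⊥
          cases hb with
          | mk1 p₁ p₂ q =>
            obtain ⟨l, r, rfl, ⟨hl, hr⟩ | ⟨hl, hr⟩⟩ := sim_star_inv hM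
            · obtain ⟨b, rfl, hb'⟩ := sim_inj_inv hl
              obtain ⟨a₁, a₂, rfl, ha₁, ha₂⟩ := sim_pair_inv hr
              exact ⟨star b a₁,
                Comp.base (Or.inl (Or.inr (Or.inr (Or.inr (PiBotB.mk1 a₁ a₂ b))))),
                Sim.sstar (sim_symm hb') (sim_symm ha₁)⟩
            · obtain ⟨a₁, a₂, rfl, ha₁, ha₂⟩ := sim_pair_inv hl
              obtain ⟨b, rfl, hb'⟩ := sim_inj_inv hr
              exact ⟨star a₁ b,
                Comp.base (Or.inl (Or.inr (Or.inr (Or.inl (PiB.mk1 a₁ a₂ b))))),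
                Sim.sswap (sim_symm hb') (sim_symm ha₁)⟩
          | mk2 p₁ p₂ q =>
            obtain ⟨l, r, rfl, ⟨hl, hr⟩ | ⟨hl, hr⟩⟩ := sim_star_inv hM
            · obtain ⟨b, rfl, hb'⟩ := sim_inj_inv hl
              obtain ⟨a₁, a₂, rfl, ha₁, ha₂⟩ := sim_pair_inv hr
              exact ⟨star b a₂,
                Comp.base (Or.inl (Or.inr (Or.inr (Or.inr (PiBotB.mk2 a₁ a₂ b))))),
                Sim.sstar (sim_symm hb') (sim_symm ha₂)⟩
            · obtain ⟨a₁, a₂, rfl, ha₁, ha₂⟩ := sim_pair_inv hl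
              obtain ⟨b, rfl, hb'⟩ := sim_inj_inv hr
              exact ⟨star a₂ b,
                Comp.base (Or.inl (Or.inr (Or.inr (Or.inl (PiB.mk2 a₁ a₂ b))))),
                Sim.sswap (sim_symm hb') (sim_symm ha₂)⟩
      · -- η / η⊥
        cases hb with
        | eta x p hx =>
          obtain ⟨m0, rfl, hm0⟩ := sim_lam_inv hM
          obtain ⟨l, r, rfl, ⟨hl, hr⟩ | ⟨hl, hr⟩⟩ := sim_star_inv hm0
          · obtain rfl := sim_var_inv hr
            refine ⟨l, Comp.base (Or.inr (EtaB.eta x l ?_)), sim_symm hl⟩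
            rw [sim_fv hl]; exact hx
          · obtain rfl := sim_var_inv hl
            refine ⟨r, Comp.base (Or.inr (EtaB.etaBot x r ?_)), sim_symm hr⟩
            rw [sim_fv hr]; exact hx
        | etaBot x p hx =>
          obtain ⟨m0, rfl, hm0⟩ := sim_lam_inv hM
          obtain ⟨l, r, rfl, ⟨hl, hr⟩ | ⟨hl, hr⟩⟩ := sim_star_inv hm0
          · obtain rfl := sim_var_inv hl
            refine ⟨r, Comp.base (Or.inr (EtaB.etaBot x r ?_)), sim_symm hr⟩
            rw [sim_fv hr]; exact hx
          · obtain rfl := sim_var_inv hr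
            refine ⟨l, Comp.base (Or.inr (EtaB.eta x l ?_)), sim_symm hl⟩
            rw [sim_fv hl]; exact hx
  | @cpairL a a' q _ ih =>
      intro M hM
      obtain ⟨m, n, rfl, hm, hn⟩ := sim_pair_inv hM
      obtain ⟨N₁, hstep, hsim⟩ := ih m hm
      exact ⟨pair N₁ n, Comp.cpairL n hstep, Sim.spair hsim (sim_symm hn)⟩
  | @cpairR p a a' _ ih =>
      intro M hM
      obtain ⟨m, n, rfl, hm, hn⟩ := sim_pair_inv hM
      obtain ⟨N₁, hstep, hsim⟩ := ih n hn
      exact ⟨pair m N₁, Comp.cpairR m hstep, Sim.spair (sim_symm hm) hsim⟩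
  | @cinj i a a' _ ih =>
      intro M hM
      obtain ⟨m, rfl, hm⟩ := sim_inj_inv hM
      obtain ⟨N₁, hstep, hsim⟩ := ih m hm
      exact ⟨inj i N₁, Comp.cinj i hstep, Sim.sinj i hsim⟩
  | @clam x a a' _ ih =>
      intro M hM
      obtain ⟨m, rfl, hm⟩ := sim_lam_inv hM
      obtain ⟨N₁, hstep, hsim⟩ := ih m hm
      exact ⟨lam x N₁, Comp.clam x hstep, Sim.slam x hsim⟩
  | @cstarL a a' q _ ih =>
      intro M hM
      obtain ⟨m, n, rfl, ⟨hm, hn⟩ | ⟨hm, hn⟩⟩ := sim_star_inv hM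
      · obtain ⟨N₁, hstep, hsim⟩ := ih m hm
        exact ⟨star N₁ n, Comp.cstarL n hstep, Sim.sstar hsim (sim_symm hn)⟩
      · obtain ⟨N₁, hstep, hsim⟩ := ih n hn
        exact ⟨star m N₁, Comp.cstarR m hstep, Sim.sswap hsim (sim_symm hm)⟩
  | @cstarR p a a' _ ih =>
      intro M hM
      obtain ⟨m, n, rfl, ⟨hm, hn⟩ | ⟨hm, hn⟩⟩ := sim_star_inv hM
      · obtain ⟨N₁, hstep, hsim⟩ := ih n hn
        exact ⟨star m N₁, Comp.cstarR m hstep, Sim.sstar (sim_symm hm) hsim⟩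
      · obtain ⟨N₁, hstep, hsim⟩ := ih m hm
        exact ⟨star N₁ n, Comp.cstarL n hstep, Sim.sswap (sim_symm hn) hsim⟩

/-- (1) ∼ is stable under substitution; (2) ∼ commutes with one-step reduction. -/
theorem stmt14 :
    (∀ (M M' N N' : Tm) (x : ℕ), Sim M M' → Sim N N' →
      Sim (subst x N M) (subst x N' M')) ∧
    (∀ M M' N : Tm, Sim M M' → StepFull M' N →
      ∃ N', StepFull M N' ∧ Sim N N') := by
  exact ⟨fun M M' N N' x hM hN => sim_subst x hM hN,
    fun M M' N hM h => sim_comm h M hM⟩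
end
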